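/- Let Q be an axis-parallel rectangle and consider the local mixed finite volume system: find the Raviart–Thomas field u = (a+bx, c+dy) such that ∫_Q (u + β∇p)·∇χ dx = 0 for all χ in span{1, x, y, x²−y²} and ∫_Q div u dx = ∫_Q f dx, where p ∈ span{1,x,y,x²−y²} and β > 0 are given. Then u exists and is unique, and its edge normal components are given explicitly by |eᵢ|(u·n)|_{eᵢ} = ∫_Q f̄ φᵢ dx − ∫_Q β∇p·∇φᵢ dx, where φᵢ is the local Rannacher–Turek basis function with edge average 1 on eᵢ and 0 on the other edges, and f̄ is the mean of f over Q. -/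

import Mathlib

/-!
Write `w = u + β∇p`. It is again a Raviart–Thomas field, with `div w = div u` because `x² − y²` is
harmonic. Integrating quadratics exactly (midpoint value plus `c₂ h²/12`) gives
`∫_Q w·∇χ = hk (w(m)·∇χ(m) + χ₃ (b h² − d k²)/6)` with `m` the centre of `Q`, so the first condition
says `w(m) = 0` and `b h² = d k²`; together with `b + d = f̄` this determines `w`, hence `u`.
The recovery formula is Green's formula `∫_Q (div u) φ + ∫_Q u·∇φ = ∑ⱼ |eⱼ| (u·n)|_{eⱼ} ⨍_{eⱼ} φ`,
exact here since `u·n` is constant on each edge, applied to `φ = φᵢ` and combined with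
`∫_Q u·∇φᵢ = −∫_Q β∇p·∇φᵢ` and `div u = f̄`.
-/

open MeasureTheory

/-- The Rannacher–Turek shape function given by a coefficient tuple. -/
noncomputable def rtphi (c : ℝ × ℝ × ℝ × ℝ) (x y : ℝ) : ℝ :=
  c.1 + c.2.1*x + c.2.2.1*y + c.2.2.2*(x^2 - y^2)

/-- Edge averages of a Rannacher–Turek function over the four edges
(bottom, right, top, left) of `Q = [x₀,x₀+h]×[y₀,y₀+k]`. -/
noncomputable def rtEdgeAvg (x₀ y₀ h k : ℝ) (c : ℝ × ℝ × ℝ × ℝ) : Fin 4 → ℝ :=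
  ![(1/h) * ∫ t in x₀..(x₀+h), rtphi c t y₀,
    (1/k) * ∫ t in y₀..(y₀+k), rtphi c (x₀+h) t,
    (1/h) * ∫ t in x₀..(x₀+h), rtphi c t (y₀+k),
    (1/k) * ∫ t in y₀..(y₀+k), rtphi c x₀ t]

/-- Lengths of the four edges of `Q`. -/
noncomputable def edgeLen (h k : ℝ) : Fin 4 → ℝ := ![h, k, h, k]

/-- Constant value of `u·n` (outward normal) on each edge of `Q` for the
Raviart–Thomas field `u = (a+bx, c+dy)`. -/
noncomputable def rtUN (x₀ y₀ h k : ℝ) (u : ℝ × ℝ × ℝ × ℝ) : Fin 4 → ℝ :=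
  ![-(u.2.2.1 + u.2.2.2*y₀),
    u.1 + u.2.1*(x₀+h),
    u.2.2.1 + u.2.2.2*(y₀+k),
    -(u.1 + u.2.1*x₀)]

/-- The local mixed finite volume conditions: `∫_Q (u + β∇p)·∇χ = 0` for every
Rannacher–Turek `χ`, and `∫_Q div u = ∫_Q f`. -/
noncomputable def mfvmCond (x₀ y₀ h k β : ℝ) (p : ℝ × ℝ × ℝ × ℝ)
    (f : ℝ × ℝ → ℝ) (u : ℝ × ℝ × ℝ × ℝ) : Prop :=
  (∀ χ : ℝ × ℝ × ℝ × ℝ,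
      (∫ x in x₀..(x₀+h), ∫ y in y₀..(y₀+k),
        ((u.1 + u.2.1*x + β*(p.2.1 + 2*p.2.2.2*x)) * (χ.2.1 + 2*χ.2.2.2*x)
          + (u.2.2.1 + u.2.2.2*y + β*(p.2.2.1 - 2*p.2.2.2*y)) * (χ.2.2.1 - 2*χ.2.2.2*y)))
        = 0)
  ∧ (∫ x in x₀..(x₀+h), ∫ y in y₀..(y₀+k), (u.2.1 + u.2.2.2))
      = ∫ z in (Set.Icc x₀ (x₀+h)) ×ˢ (Set.Icc y₀ (y₀+k)), f z

theorem integral_quadratic {q : ℝ → ℝ} (a h c₀ c₁ c₂ : ℝ)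
    (hq : ∀ t, q t = c₀ + c₁ * t + c₂ * t ^ 2) :
    ∫ t in a..a + h, q t = h * (q (a + h / 2) + c₂ * h ^ 2 / 12) := by
  have hc₁ : IntervalIntegrable (fun t : ℝ => c₁ * t) volume a (a + h) :=
    (continuous_const.mul continuous_id).intervalIntegrable _ _
  have hc₂ : IntervalIntegrable (fun t : ℝ => c₂ * t ^ 2) volume a (a + h) :=
    (continuous_const.mul (continuous_pow 2)).intervalIntegrable _ _
  simp only [hq]
  rw [intervalIntegral.integral_add (intervalIntegrable_const.add hc₁) hc₂,
    intervalIntegral.integral_add intervalIntegrable_const hc₁, intervalIntegral.integral_const,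
    intervalIntegral.integral_const_mul, intervalIntegral.integral_const_mul, integral_id,
    integral_pow, smul_eq_mul]
  ring

theorem integral_integral_add {F G : ℝ → ℝ} {a b c d : ℝ}
    (hF : IntervalIntegrable F volume a b) (hG : IntervalIntegrable G volume c d) :
    ∫ x in a..b, ∫ y in c..d, (F x + G y)
      = (d - c) * (∫ x in a..b, F x) + (b - a) * ∫ y in c..d, G y := by
  simp only [intervalIntegral.integral_add intervalIntegrable_const hG,
    intervalIntegral.integral_const, smul_eq_mul]
  rw [intervalIntegral.integral_add (hF.const_mul _) intervalIntegrable_const,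
    intervalIntegral.integral_const_mul, intervalIntegral.integral_const, smul_eq_mul,
    mul_comm (b - a)]

section RannacherTurek

variable {x₀ y₀ h k : ℝ}

noncomputable def rtGrad (c : ℝ × ℝ × ℝ × ℝ) : ℝ × ℝ × ℝ × ℝ :=
  (c.2.1, 2 * c.2.2.2, c.2.2.1, -(2 * c.2.2.2))

noncomputable def rtPairing (x₀ y₀ h k : ℝ) (w χ : ℝ × ℝ × ℝ × ℝ) : ℝ :=
  ∫ x in x₀..x₀ + h, ∫ y in y₀..y₀ + k,
    ((w.1 + w.2.1 * x) * (χ.2.1 + 2 * χ.2.2.2 * x)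
      + (w.2.2.1 + w.2.2.2 * y) * (χ.2.2.1 - 2 * χ.2.2.2 * y))

theorem rtPairing_eq (w χ : ℝ × ℝ × ℝ × ℝ) :
    rtPairing x₀ y₀ h k w χ
      = h * k * ((w.1 + w.2.1 * (x₀ + h / 2)) * (χ.2.1 + 2 * χ.2.2.2 * (x₀ + h / 2))
        + (w.2.2.1 + w.2.2.2 * (y₀ + k / 2)) * (χ.2.2.1 - 2 * χ.2.2.2 * (y₀ + k / 2))
        + χ.2.2.2 * (w.2.1 * h ^ 2 - w.2.2.2 * k ^ 2) / 6) := by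
  rw [rtPairing, integral_integral_add ((by fun_prop : Continuous _).intervalIntegrable _ _)
    ((by fun_prop : Continuous _).intervalIntegrable _ _),
    integral_quadratic x₀ h (w.1 * χ.2.1) (w.1 * (2 * χ.2.2.2) + w.2.1 * χ.2.1)
      (2 * w.2.1 * χ.2.2.2) ?_,
    integral_quadratic y₀ k (w.2.2.1 * χ.2.2.1) (w.2.2.2 * χ.2.2.1 - 2 * w.2.2.1 * χ.2.2.2)
      (-(2 * w.2.2.2 * χ.2.2.2)) ?_]
  · ring
  all_goals intro t; ring

theorem rtPairing_add (v w χ : ℝ × ℝ × ℝ × ℝ) :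
    rtPairing x₀ y₀ h k (v + w) χ = rtPairing x₀ y₀ h k v χ + rtPairing x₀ y₀ h k w χ := by
  simp only [rtPairing_eq, Prod.fst_add, Prod.snd_add]
  ring

theorem forall_rtPairing_eq_zero_iff (hh : h ≠ 0) (hk : k ≠ 0) (w : ℝ × ℝ × ℝ × ℝ) :
    (∀ χ, rtPairing x₀ y₀ h k w χ = 0) ↔
      w.1 + w.2.1 * (x₀ + h / 2) = 0 ∧ w.2.2.1 + w.2.2.2 * (y₀ + k / 2) = 0
        ∧ w.2.1 * h ^ 2 = w.2.2.2 * k ^ 2 := by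
  simp only [rtPairing_eq, mul_eq_zero, hh, hk, false_or]
  refine ⟨fun H => ?_, fun ⟨hA, hC, hBD⟩ χ => ?_⟩
  · have hA := H (0, 1, 0, 0)
    have hC := H (0, 0, 1, 0)
    have hχ := H (0, 0, 0, 1)
    norm_num at hA hC hχ
    refine ⟨hA, hC, ?_⟩
    rw [hA, hC] at hχ
    linarith
  · rw [hA, hC, hBD]
    ring

theorem integral_rtphi_along_x (c : ℝ × ℝ × ℝ × ℝ) (y : ℝ) :
    ∫ t in x₀..x₀ + h, rtphi c t y = h * (rtphi c (x₀ + h / 2) y + c.2.2.2 * h ^ 2 / 12) :=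
  integral_quadratic x₀ h (c.1 + c.2.2.1 * y - c.2.2.2 * y ^ 2) c.2.1 c.2.2.2
    fun t => by rw [rtphi]; ring

theorem integral_rtphi_along_y (c : ℝ × ℝ × ℝ × ℝ) (x : ℝ) :
    ∫ t in y₀..y₀ + k, rtphi c x t = k * (rtphi c x (y₀ + k / 2) - c.2.2.2 * k ^ 2 / 12) := by
  rw [integral_quadratic y₀ k (c.1 + c.2.1 * x + c.2.2.2 * x ^ 2) c.2.2.1 (-c.2.2.2)
    fun t => by rw [rtphi]; ring]
  ring

theorem integral_integral_rtphi (c : ℝ × ℝ × ℝ × ℝ) :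
    ∫ x in x₀..x₀ + h, ∫ y in y₀..y₀ + k, rtphi c x y
      = h * k * (rtphi c (x₀ + h / 2) (y₀ + k / 2) + c.2.2.2 * (h ^ 2 - k ^ 2) / 12) := by
  simp only [integral_rtphi_along_y]
  rw [integral_quadratic x₀ h (k * (c.1 + c.2.2.1 * (y₀ + k / 2) - c.2.2.2 * (y₀ + k / 2) ^ 2
    - c.2.2.2 * k ^ 2 / 12)) (k * c.2.1) (k * c.2.2.2) fun t => by rw [rtphi]; ring]
  rw [rtphi]
  ring

theorem rt_green_formula (u c : ℝ × ℝ × ℝ × ℝ) :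
    (u.2.1 + u.2.2.2) * (∫ x in x₀..x₀ + h, ∫ y in y₀..y₀ + k, rtphi c x y)
        + rtPairing x₀ y₀ h k u c
      = ∑ j, edgeLen h k j * rtUN x₀ y₀ h k u j * rtEdgeAvg x₀ y₀ h k c j := by
  rw [integral_integral_rtphi, rtPairing_eq]
  simp only [Fin.sum_univ_four, edgeLen, rtUN, rtEdgeAvg, Matrix.cons_val_zero,
    Matrix.cons_val_one, Matrix.cons_val_two, Matrix.cons_val_three, Matrix.head_cons,
    Matrix.tail_cons, integral_rtphi_along_x, integral_rtphi_along_y]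
  simp only [rtphi]
  field_simp
  ring

theorem div_rtGrad_eq_zero (p : ℝ × ℝ × ℝ × ℝ) : (rtGrad p).2.1 + (rtGrad p).2.2.2 = 0 := by
  simp only [rtGrad]
  ring

noncomputable def rtOrthField (x₀ y₀ h k s : ℝ) : ℝ × ℝ × ℝ × ℝ :=
  (-(s * k ^ 2 / (h ^ 2 + k ^ 2)) * (x₀ + h / 2), s * k ^ 2 / (h ^ 2 + k ^ 2),
    -(s * h ^ 2 / (h ^ 2 + k ^ 2)) * (y₀ + k / 2), s * h ^ 2 / (h ^ 2 + k ^ 2))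

theorem forall_rtPairing_eq_zero_and_div_iff (hh : h ≠ 0) (hk : k ≠ 0) (w : ℝ × ℝ × ℝ × ℝ)
    (s : ℝ) :
    ((∀ χ, rtPairing x₀ y₀ h k w χ = 0) ∧ w.2.1 + w.2.2.2 = s) ↔ w = rtOrthField x₀ y₀ h k s := by
  have hhk : h ^ 2 + k ^ 2 ≠ 0 := by positivity
  rw [forall_rtPairing_eq_zero_iff hh hk]
  constructor
  · rintro ⟨⟨hA, hC, hBD⟩, hdiv⟩
    have hB : w.2.1 = s * k ^ 2 / (h ^ 2 + k ^ 2) := by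
      rw [eq_div_iff hhk]; linear_combination hBD + k ^ 2 * hdiv
    have hD : w.2.2.2 = s * h ^ 2 / (h ^ 2 + k ^ 2) := by
      rw [eq_div_iff hhk]; linear_combination -hBD + h ^ 2 * hdiv
    simp only [rtOrthField, Prod.ext_iff]
    refine ⟨?_, hB, ?_, hD⟩
    · rw [← hB]; linarith
    · rw [← hD]; linarith
  · rintro rfl
    simp only [rtOrthField]
    refine ⟨⟨by ring, by ring, ?_⟩, ?_⟩
    · field_simp
    · field_simp
      ring

theorem rtPairing_smul_rtGrad (β : ℝ) (p χ : ℝ × ℝ × ℝ × ℝ) :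
    rtPairing x₀ y₀ h k (β • rtGrad p) χ
      = ∫ x in x₀..x₀ + h, ∫ y in y₀..y₀ + k,
          β * ((p.2.1 + 2 * p.2.2.2 * x) * (χ.2.1 + 2 * χ.2.2.2 * x)
            + (p.2.2.1 - 2 * p.2.2.2 * y) * (χ.2.2.1 - 2 * χ.2.2.2 * y)) :=
  intervalIntegral.integral_congr fun x _ => intervalIntegral.integral_congr fun y _ => by
    simp only [rtGrad, Prod.smul_fst, Prod.smul_snd, smul_eq_mul]
    ring

theorem mfvmCond_iff (β : ℝ) (p : ℝ × ℝ × ℝ × ℝ) (f : ℝ × ℝ → ℝ) (u : ℝ × ℝ × ℝ × ℝ) :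
    mfvmCond x₀ y₀ h k β p f u ↔
      (∀ χ, rtPairing x₀ y₀ h k (u + β • rtGrad p) χ = 0)
        ∧ h * k * (u.2.1 + u.2.2.2) = ∫ z in Set.Icc x₀ (x₀ + h) ×ˢ Set.Icc y₀ (y₀ + k), f z := by
  have hpair (χ : ℝ × ℝ × ℝ × ℝ) :
      (∫ x in x₀..x₀ + h, ∫ y in y₀..y₀ + k,
        ((u.1 + u.2.1 * x + β * (p.2.1 + 2 * p.2.2.2 * x)) * (χ.2.1 + 2 * χ.2.2.2 * x)
          + (u.2.2.1 + u.2.2.2 * y + β * (p.2.2.1 - 2 * p.2.2.2 * y))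
            * (χ.2.2.1 - 2 * χ.2.2.2 * y)))
        = rtPairing x₀ y₀ h k (u + β • rtGrad p) χ :=
    intervalIntegral.integral_congr fun x _ => intervalIntegral.integral_congr fun y _ => by
      simp only [rtGrad, Prod.fst_add, Prod.snd_add, Prod.smul_fst, Prod.smul_snd, smul_eq_mul]
      ring
  have hdiv :
      ∫ x in x₀..x₀ + h, ∫ y in y₀..y₀ + k, (u.2.1 + u.2.2.2) = h * k * (u.2.1 + u.2.2.2) := by
    simp only [intervalIntegral.integral_const, smul_eq_mul]
    ring
  rw [mfvmCond, hdiv]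
  simp only [hpair]

theorem mfvmCond_iff_eq (hh : h ≠ 0) (hk : k ≠ 0) (β : ℝ) (p : ℝ × ℝ × ℝ × ℝ) (f : ℝ × ℝ → ℝ)
    (u : ℝ × ℝ × ℝ × ℝ) :
    mfvmCond x₀ y₀ h k β p f u ↔ u = rtOrthField x₀ y₀ h k
      ((∫ z in Set.Icc x₀ (x₀ + h) ×ˢ Set.Icc y₀ (y₀ + k), f z) / (h * k)) - β • rtGrad p := by
  have hdiv : (u + β • rtGrad p).2.1 + (u + β • rtGrad p).2.2.2 = u.2.1 + u.2.2.2 := by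
    simp only [Prod.fst_add, Prod.snd_add, Prod.smul_fst, Prod.smul_snd, smul_eq_mul]
    linear_combination β * div_rtGrad_eq_zero p
  rw [mfvmCond_iff, eq_sub_iff_add_eq, ← forall_rtPairing_eq_zero_and_div_iff hh hk, hdiv,
    eq_div_iff (mul_ne_zero hh hk), mul_comm]

end RannacherTurek

theorem stmt9_general (x₀ y₀ h k β : ℝ) (hh : 0 < h) (hk : 0 < k)
    (p : ℝ × ℝ × ℝ × ℝ) (f : ℝ × ℝ → ℝ) :
    (∃! u : ℝ × ℝ × ℝ × ℝ, mfvmCond x₀ y₀ h k β p f u)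
    ∧ (∀ u : ℝ × ℝ × ℝ × ℝ, mfvmCond x₀ y₀ h k β p f u →
        ∀ φ : Fin 4 → ℝ × ℝ × ℝ × ℝ,
          (∀ i j : Fin 4, rtEdgeAvg x₀ y₀ h k (φ i) j = if i = j then 1 else 0) →
          ∀ i : Fin 4,
            edgeLen h k i * rtUN x₀ y₀ h k u i
              = (∫ x in x₀..(x₀+h), ∫ y in y₀..(y₀+k),
                  ((∫ z in (Set.Icc x₀ (x₀+h)) ×ˢ (Set.Icc y₀ (y₀+k)), f z) / (h*k))
                    * rtphi (φ i) x y)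
                - (∫ x in x₀..(x₀+h), ∫ y in y₀..(y₀+k),
                    β * ((p.2.1 + 2*p.2.2.2*x) * ((φ i).2.1 + 2*(φ i).2.2.2*x)
                      + (p.2.2.1 - 2*p.2.2.2*y) * ((φ i).2.2.1 - 2*(φ i).2.2.2*y)))) := by
  refine ⟨⟨_, (mfvmCond_iff_eq hh.ne' hk.ne' β p f _).2 rfl,
    fun v hv => (mfvmCond_iff_eq hh.ne' hk.ne' β p f v).1 hv⟩, ?_⟩
  intro u hu φ hφ i
  obtain ⟨horth, hdiv⟩ := (mfvmCond_iff β p f u).1 hu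
  have hmean : (∫ z in Set.Icc x₀ (x₀ + h) ×ˢ Set.Icc y₀ (y₀ + k), f z) / (h * k)
      = u.2.1 + u.2.2.2 := by
    rw [← hdiv, mul_div_cancel_left₀ _ (mul_ne_zero hh.ne' hk.ne')]
  have hedge : edgeLen h k i * rtUN x₀ y₀ h k u i
      = ∑ j, edgeLen h k j * rtUN x₀ y₀ h k u j * rtEdgeAvg x₀ y₀ h k (φ i) j := by
    simp [hφ]
  rw [← rtPairing_smul_rtGrad]
  simp only [intervalIntegral.integral_const_mul]
  rw [hedge, ← rt_green_formula, hmean]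
  linear_combination horth (φ i) - rtPairing_add u (β • rtGrad p) (φ i)

/-- Existence and uniqueness of the local MFVM velocity, together with the local
recovery formula `|eᵢ| (u·n)|_{eᵢ} = ∫_Q f̄ φᵢ − ∫_Q β∇p·∇φᵢ`, where `φᵢ` is the
Rannacher–Turek basis function with edge averages `δᵢⱼ` and `f̄` is the mean of `f`. -/
theorem stmt9 (x₀ y₀ h k β : ℝ) (hh : 0 < h) (hk : 0 < k) (hβ : 0 < β)
    (p : ℝ × ℝ × ℝ × ℝ) (f : ℝ × ℝ → ℝ)
    (hf : IntegrableOn f ((Set.Icc x₀ (x₀+h)) ×ˢ (Set.Icc y₀ (y₀+k)))) :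
    (∃! u : ℝ × ℝ × ℝ × ℝ, mfvmCond x₀ y₀ h k β p f u)
    ∧ (∀ u : ℝ × ℝ × ℝ × ℝ, mfvmCond x₀ y₀ h k β p f u →
        ∀ φ : Fin 4 → ℝ × ℝ × ℝ × ℝ,
          (∀ i j : Fin 4, rtEdgeAvg x₀ y₀ h k (φ i) j = if i = j then 1 else 0) →
          ∀ i : Fin 4,
            edgeLen h k i * rtUN x₀ y₀ h k u i
              = (∫ x in x₀..(x₀+h), ∫ y in y₀..(y₀+k),
                  ((∫ z in (Set.Icc x₀ (x₀+h)) ×ˢ (Set.Icc y₀ (y₀+k)), f z) / (h*k))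
                    * rtphi (φ i) x y)
                - (∫ x in x₀..(x₀+h), ∫ y in y₀..(y₀+k),
                    β * ((p.2.1 + 2*p.2.2.2*x) * ((φ i).2.1 + 2*(φ i).2.2.2*x)
                      + (p.2.2.1 - 2*p.2.2.2*y) * ((φ i).2.2.1 - 2*(φ i).2.2.2*y)))) :=
  stmt9_general x₀ y₀ h k β hh hk p f
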